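/- arXiv:2409.19092 — 5 statements merged into one kernel-verified Lean document; each statement's English description precedes it below -/
import Mathlib

section
/- Let (Ω, ℙ) be a probability space, λ > 0, and m, d natural numbers with d ≥ 2 and 2·ln d ≤ m. Let Y₁, …, Y_d : Ω → ℝ be measurable random variables such that for each n and every real c: ℙ(|Y_n| ≥ c) ≤ 2·exp(−c²/(8·m·λ²)) whenever 0 ≤ c ≤ 2·m·λ, and ℙ(|Y_n| ≥ c) ≤ 2·exp(−c/(4λ)) whenever c ≥ 2·m·λ. Then E[max_{1 ≤ n ≤ d} |Y_n|] ≤ √(8·m·ln d)·λ + √(8·π·m)·λ + 8·λ·ln d + 8·λ. -/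
/-!
By the layer-cake formula and a union bound over the `d` variables, the expectation is at most
`∫₀^∞ min(1, d · P(|Y_n| ≥ t)) dt`. Split the integral at `a = √(8 m ln d) λ`, where the union
bound `2 d exp(-t² / (8 m λ²))` drops to `2`, and at `b = 2 m λ`, where the regimes switch. The
first piece is at most `a`. On `[a, b]` the Gaussian tail is dominated by the exponential of its
tangent line at `a`, which integrates to `8 m λ² / a ≤ √(8 π m) λ`. Beyond `b` the exponential
tail integrates to `8 λ d e^{-m/2} ≤ 8 λ`, because `m ≥ 2 ln d`.
-/

open MeasureTheory Real Set
open scoped ENNReal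

lemma lintegral_ofReal_le_lintegral_meas_le {α : Type*} [MeasurableSpace α] (μ : Measure α)
    {f : α → ℝ} (hf : 0 ≤ f) :
    ∫⁻ ω, ENNReal.ofReal (f ω) ∂μ ≤ ∫⁻ t in Ioi 0, μ {ω | t ≤ f ω} := by
  obtain ⟨g, hg, hgf, hfg⟩ := exists_measurable_le_lintegral_eq μ fun ω => ENNReal.ofReal (f ω)
  have hg_ne_top : ∀ ω, g ω ≠ ∞ := fun ω => ne_top_of_le_ne_top ENNReal.ofReal_ne_top (hgf ω)
  have hg_le : ∀ ω, (g ω).toReal ≤ f ω := fun ω =>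
    ENNReal.toReal_le_of_le_ofReal (hf ω) (hgf ω)
  calc ∫⁻ ω, ENNReal.ofReal (f ω) ∂μ = ∫⁻ ω, ENNReal.ofReal (g ω).toReal ∂μ := by
        simp only [hfg, ENNReal.ofReal_toReal (hg_ne_top _)]
    _ = ∫⁻ t in Ioi 0, μ {ω | t ≤ (g ω).toReal} :=
        lintegral_eq_lintegral_meas_le μ (.of_forall fun _ => ENNReal.toReal_nonneg)
          hg.ennreal_toReal.aemeasurable
    _ ≤ ∫⁻ t in Ioi 0, μ {ω | t ≤ f ω} :=
        lintegral_mono fun t => measure_mono fun ω (h : t ≤ _) => h.trans (hg_le ω)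

lemma measure_le_sup'_le {ι Ω : Type*} [MeasurableSpace Ω] (μ : Measure Ω) {s : Finset ι}
    (H : s.Nonempty) (f : ι → Ω → ℝ) (t : ℝ) {ε : ℝ≥0∞}
    (h : ∀ i ∈ s, μ {ω | t ≤ f i ω} ≤ ε) :
    μ {ω | t ≤ s.sup' H fun i => f i ω} ≤ s.card * ε := by
  have hset : {ω | t ≤ s.sup' H fun i => f i ω} = ⋃ i ∈ s, {ω | t ≤ f i ω} := by
    ext ω
    simp [Finset.le_sup'_iff]
  rw [hset]
  calc μ (⋃ i ∈ s, {ω | t ≤ f i ω}) ≤ ∑ i ∈ s, μ {ω | t ≤ f i ω} :=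
        measure_biUnion_finset_le _ _
    _ ≤ s.card * ε := by simpa using Finset.sum_le_card_nsmul s _ ε h

lemma integral_exp_neg_div_Ioi {β : ℝ} (hβ : 0 < β) (b : ℝ) :
    ∫ t in Ioi b, exp (-t / β) = β * exp (-b / β) := by
  have := integral_comp_mul_left_Ioi (fun x => exp (-x)) b (inv_pos.2 hβ)
  simp only [integral_exp_neg_Ioi, smul_eq_mul, inv_inv] at this
  convert this using 4 <;> ring

lemma lintegral_exp_neg_div_Ioi {β : ℝ} (hβ : 0 < β) (b : ℝ) :
    ∫⁻ t in Ioi b, ENNReal.ofReal (exp (-t / β)) = ENNReal.ofReal (β * exp (-b / β)) := by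
  have hint : IntegrableOn (fun t => exp (-t / β)) (Ioi b) := by
    convert exp_neg_integrableOn_Ioi b (inv_pos.2 hβ) using 3
    ring
  rw [← ofReal_integral_eq_lintegral_ofReal hint (.of_forall fun _ => (exp_pos _).le),
    integral_exp_neg_div_Ioi hβ]

lemma lintegral_exp_neg_sq_div_Ioi_le {s a : ℝ} (hs : 0 < s) (ha : 0 < a) :
    ∫⁻ t in Ioi a, ENNReal.ofReal (exp (-t ^ 2 / s))
      ≤ ENNReal.ofReal (s / (2 * a) * exp (-a ^ 2 / s)) := by
  have hβ : 0 < s / (2 * a) := by positivity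
  calc ∫⁻ t in Ioi a, ENNReal.ofReal (exp (-t ^ 2 / s))
      ≤ ∫⁻ t in Ioi a,
          ENNReal.ofReal (exp (a ^ 2 / s)) * ENNReal.ofReal (exp (-t / (s / (2 * a)))) :=
        lintegral_mono fun t => by
          rw [← ENNReal.ofReal_mul (exp_pos _).le, ← exp_add]
          refine ENNReal.ofReal_le_ofReal (exp_le_exp.2 ?_)
          -- the tangent line of `-t ^ 2` at `a`
          have : -t ^ 2 ≤ a ^ 2 - 2 * a * t := by nlinarith [sq_nonneg (t - a)]
          field_simp
          linarith
    _ = ENNReal.ofReal (exp (a ^ 2 / s))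
          * ENNReal.ofReal (s / (2 * a) * exp (-a / (s / (2 * a)))) := by
        rw [lintegral_const_mul _ (by fun_prop), lintegral_exp_neg_div_Ioi hβ]
    _ = ENNReal.ofReal (s / (2 * a) * exp (-a ^ 2 / s)) := by
        rw [← ENNReal.ofReal_mul (exp_pos _).le, mul_left_comm, ← exp_add]
        field_simp
        ring_nf

lemma setLIntegral_Ioi_le_of_tail_bounds {T : ℝ → ℝ≥0∞} {C s β a b : ℝ}
    (hC : 0 ≤ C) (hs : 0 < s) (hβ : 0 < β) (ha : 0 < a) (hab : a ≤ b)
    (h_le_one : ∀ t, T t ≤ 1)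
    (h_mid : ∀ t ∈ Ioc a b, T t ≤ ENNReal.ofReal (C * exp (-t ^ 2 / s)))
    (h_far : ∀ t ∈ Ioi b, T t ≤ ENNReal.ofReal (C * exp (-t / β))) :
    ∫⁻ t in Ioi 0, T t ≤ ENNReal.ofReal a
      + ENNReal.ofReal (C * (s / (2 * a) * exp (-a ^ 2 / s)))
      + ENNReal.ofReal (C * (β * exp (-b / β))) := by
  rw [← Ioc_union_Ioi_eq_Ioi ha.le, lintegral_union measurableSet_Ioi Ioc_disjoint_Ioi_same,
    ← Ioc_union_Ioi_eq_Ioi hab, lintegral_union measurableSet_Ioi Ioc_disjoint_Ioi_same,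
    ← add_assoc]
  gcongr ?_ + ?_ + ?_
  · calc ∫⁻ t in Ioc 0 a, T t ≤ ∫⁻ _ in Ioc 0 a, 1 := lintegral_mono h_le_one
      _ = ENNReal.ofReal a := by simp
  · calc ∫⁻ t in Ioc a b, T t
        ≤ ∫⁻ t in Ioc a b, ENNReal.ofReal C * ENNReal.ofReal (exp (-t ^ 2 / s)) :=
          setLIntegral_mono (by fun_prop) fun t ht => by
            rw [← ENNReal.ofReal_mul hC]
            exact h_mid t ht
      _ ≤ ∫⁻ t in Ioi a, ENNReal.ofReal C * ENNReal.ofReal (exp (-t ^ 2 / s)) :=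
          lintegral_mono_set Ioc_subset_Ioi_self
      _ ≤ ENNReal.ofReal C * ENNReal.ofReal (s / (2 * a) * exp (-a ^ 2 / s)) := by
          rw [lintegral_const_mul _ (by fun_prop)]
          gcongr
          exact lintegral_exp_neg_sq_div_Ioi_le hs ha
      _ = _ := (ENNReal.ofReal_mul hC).symm
  · calc ∫⁻ t in Ioi b, T t
        ≤ ∫⁻ t in Ioi b, ENNReal.ofReal C * ENNReal.ofReal (exp (-t / β)) :=
          setLIntegral_mono (by fun_prop) fun t ht => by
            rw [← ENNReal.ofReal_mul hC]
            exact h_far t ht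
      _ = _ := by
          rw [lintegral_const_mul _ (by fun_prop), lintegral_exp_neg_div_Ioi hβ,
            ENNReal.ofReal_mul hC]

lemma setLIntegral_Ioi_le_of_laplace_sum_tails {T : ℝ → ℝ≥0∞} {lam m d : ℝ} (hlam : 0 < lam)
    (hd : 2 ≤ d) (hmd : 2 * log d ≤ m) (h_le_one : ∀ t, T t ≤ 1)
    (h₁ : ∀ t, 0 ≤ t → t ≤ 2 * m * lam →
      T t ≤ ENNReal.ofReal (2 * d * exp (-t ^ 2 / (8 * m * lam ^ 2))))
    (h₂ : ∀ t, 2 * m * lam ≤ t → T t ≤ ENNReal.ofReal (2 * d * exp (-t / (4 * lam)))) :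
    ∫⁻ t in Ioi 0, T t ≤ ENNReal.ofReal (√(8 * m * log d) * lam
      + √(8 * π * m) * lam + 8 * lam * log d + 8 * lam) := by
  set L := log d
  have hd0 : 0 < d := by linarith
  have hπL : 1 ≤ π * L := by
    nlinarith [log_le_log two_pos hd, pi_gt_three, log_two_gt_d9]
  have hL : 0 < L := by nlinarith [pi_pos]
  have hm : 0 < m := by linarith
  have hexp_neg_L : exp (-L) = d⁻¹ := by rw [exp_neg, exp_log hd0]
  set a := √(8 * m * L) * lam
  set b := 2 * m * lam
  set s := 8 * m * lam ^ 2
  have ha : 0 < a := by positivity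
  have hab : a ≤ b := by
    have : √(8 * m * L) ≤ 2 * m := sqrt_le_iff.2 ⟨by positivity, by nlinarith⟩
    exact mul_le_mul_of_nonneg_right this hlam.le
  refine (setLIntegral_Ioi_le_of_tail_bounds (by positivity) (by positivity)
    (by positivity : 0 < 4 * lam) ha hab h_le_one
    (fun t ht => h₁ t (ha.le.trans ht.1.le) ht.2) (fun t ht => h₂ t ht.le)).trans ?_
  rw [← ENNReal.ofReal_add (by positivity) (by positivity),
    ← ENNReal.ofReal_add (by positivity) (by positivity)]
  refine ENNReal.ofReal_le_ofReal ?_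
  have h_mid : 2 * d * (s / (2 * a) * exp (-a ^ 2 / s)) = s / a := by
    have : a ^ 2 / s = L := by
      rw [mul_pow, sq_sqrt (by positivity)]
      field_simp
      exact div_self (by positivity)
    rw [neg_div, this, hexp_neg_L]
    field_simp
  have h_mid_le : s / a ≤ √(8 * π * m) * lam := by
    have : 8 * m ≤ √(8 * π * m) * √(8 * m * L) := by
      rw [← sqrt_mul (by positivity)]
      exact le_sqrt_of_sq_le (by nlinarith)
    rw [div_le_iff₀ ha]
    nlinarith [sq_nonneg lam]
  have h_far : d * exp (-b / (4 * lam)) ≤ 1 := by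
    have : exp (-b / (4 * lam)) ≤ d⁻¹ := by
      rw [← hexp_neg_L, exp_le_exp, div_le_iff₀ (by positivity)]
      nlinarith
    exact (le_div_iff₀' hd0).1 (this.trans_eq (one_div _).symm)
  nlinarith

/-- Expectation bound for the maximum of `d` random variables each satisfying the
Gaussian-regime and exponential-regime tail bounds of sums of `m` i.i.d. Laplace(`lam`)
variables: `E[max_n |Y n|] ≤ √(8*m*ln d)*lam + √(8*π*m)*lam + 8*lam*ln d + 8*lam`. -/
theorem expected_max_abs_bound {Ω : Type*} [MeasurableSpace Ω]
    (P : Measure Ω) [IsProbabilityMeasure P]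
    (lam : ℝ) (hlam : 0 < lam) (m d : ℕ) (hd : 2 ≤ d) (hmd : 2 * Real.log d ≤ m)
    (Y : Fin d → Ω → ℝ)
    (htail₁ : ∀ n, ∀ c : ℝ, 0 ≤ c → c ≤ 2 * m * lam →
      P {ω | c ≤ |Y n ω|} ≤ ENNReal.ofReal (2 * Real.exp (-c ^ 2 / (8 * m * lam ^ 2))))
    (htail₂ : ∀ n, ∀ c : ℝ, 2 * m * lam ≤ c →
      P {ω | c ≤ |Y n ω|} ≤ ENNReal.ofReal (2 * Real.exp (-c / (4 * lam)))) :
    ∫⁻ ω, ENNReal.ofReal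
        (Finset.univ.sup' ⟨(⟨0, by omega⟩ : Fin d), Finset.mem_univ _⟩
          fun n => |Y n ω|) ∂P
      ≤ ENNReal.ofReal (Real.sqrt (8 * m * Real.log d) * lam
          + Real.sqrt (8 * Real.pi * m) * lam + 8 * lam * Real.log d + 8 * lam) := by
  have hnonempty : (Finset.univ : Finset (Fin d)).Nonempty := ⟨⟨0, by omega⟩, Finset.mem_univ _⟩
  have hmax_nonneg : 0 ≤ fun ω => Finset.univ.sup' hnonempty fun n => |Y n ω| := fun ω =>
    (abs_nonneg _).trans (Finset.le_sup' (fun n => |Y n ω|) (Finset.mem_univ ⟨0, by omega⟩))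
  have union_bound : ∀ t g, (∀ n, P {ω | t ≤ |Y n ω|} ≤ ENNReal.ofReal (2 * g)) →
      P {ω | t ≤ Finset.univ.sup' hnonempty fun n => |Y n ω|}
        ≤ ENNReal.ofReal (2 * d * g) := by
    intro t g h
    refine (measure_le_sup'_le P hnonempty (fun n ω => |Y n ω|) t fun n _ => h n).trans_eq ?_
    rw [Finset.card_univ, Fintype.card_fin, ← ENNReal.ofReal_natCast,
      ← ENNReal.ofReal_mul (Nat.cast_nonneg d), mul_left_comm, mul_assoc]
  exact (lintegral_ofReal_le_lintegral_meas_le P hmax_nonneg).trans <|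
    setLIntegral_Ioi_le_of_laplace_sum_tails hlam (by exact_mod_cast hd) hmd
      (fun _ => prob_le_one) (fun t h₀ h₁ => union_bound t _ fun n => htail₁ n t h₀ h₁)
      (fun t h => union_bound t _ fun n => htail₂ n t h)
end

section
/- There exists a universal constant C > 0 such that the following holds. For every probability space (Ω, ℙ), every λ > 0, every natural number m ≥ 1, every natural number d ≥ 2, and every family ξ_{i,n} : Ω → ℝ (for i ∈ {1,…,m}, n ∈ {1,…,d}) of mutually independent random variables each of whose law is the Laplace distribution with scale λ, one has E[max_{1 ≤ n ≤ d} |∑_{i=1}^m ξ_{i,n}|] ≤ C·√m·λ·ln d. -/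
/-!
A Laplace(`λ`) variable has moment generating function `(1 - s²λ²)⁻¹` for `|s| < λ⁻¹`, so a row
sum of `m` independent copies has moment generating function `(1 - 1/(4m))⁻ᵐ ≤ 2` (Bernoulli) at
`s = ±t`, `t = (2λ√m)⁻¹`. For every `a`, `|x| ≤ a + t⁻¹ e^{-ta} (e^{tx} + e^{-tx})`; bounding the
maximum of the `d` row sums this way, taking expectations and choosing `a = t⁻¹ log (4d)` gives
`E max ≤ t⁻¹ (log (4d) + 1) = 2λ√m (log (4d) + 1) ≤ 10 √m λ log d`.
-/

open MeasureTheory Real ProbabilityTheory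

/-- The Laplace distribution with scale `lam > 0`: the measure on `ℝ` with density
`x ↦ (1/(2*lam)) * exp (-|x|/lam)` with respect to Lebesgue measure. -/
noncomputable def laplaceMeasure (lam : ℝ) : Measure ℝ :=
  volume.withDensity fun x => ENNReal.ofReal ((1 / (2 * lam)) * Real.exp (-|x| / lam))

noncomputable def laplacePDFReal (lam x : ℝ) : ℝ := 1 / (2 * lam) * exp (-|x| / lam)

section Laplace

open Set

variable {lam s : ℝ}

lemma laplacePDFReal_nonneg (hl : 0 ≤ lam) (x : ℝ) : 0 ≤ laplacePDFReal lam x := by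
  unfold laplacePDFReal; positivity

lemma laplaceMeasure_eq_withDensity :
    laplaceMeasure lam = volume.withDensity fun x => ENNReal.ofReal (laplacePDFReal lam x) :=
  rfl

lemma measurable_laplacePDFReal : Measurable (laplacePDFReal lam) := by
  unfold laplacePDFReal; fun_prop

lemma laplacePDFReal_mul_exp_eqOn_Iic :
    EqOn (fun x => laplacePDFReal lam x * exp (s * x))
      (fun x => 1 / (2 * lam) * exp ((s + lam⁻¹) * x)) (Iic 0) := by
  intro x hx
  simp only [laplacePDFReal, abs_of_nonpos (mem_Iic.mp hx), mul_assoc, ← exp_add]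
  ring_nf

lemma laplacePDFReal_mul_exp_eqOn_Ioi :
    EqOn (fun x => laplacePDFReal lam x * exp (s * x))
      (fun x => 1 / (2 * lam) * exp ((s - lam⁻¹) * x)) (Ioi 0) := by
  intro x hx
  simp only [laplacePDFReal, abs_of_pos (mem_Ioi.mp hx), mul_assoc, ← exp_add]
  ring_nf

variable (hs : |s| < lam⁻¹)
include hs

lemma integrable_laplacePDFReal_mul_exp :
    Integrable (fun x => laplacePDFReal lam x * exp (s * x)) := by
  rw [← integrableOn_univ, ← Iic_union_Ioi (a := 0)]
  refine IntegrableOn.union ?_ ?_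
  · exact IntegrableOn.congr_fun
      ((integrableOn_exp_mul_Iic (by linarith [neg_abs_le s]) 0).const_mul _)
      laplacePDFReal_mul_exp_eqOn_Iic.symm measurableSet_Iic
  · exact IntegrableOn.congr_fun
      ((integrableOn_exp_mul_Ioi (by linarith [le_abs_self s]) 0).const_mul _)
      laplacePDFReal_mul_exp_eqOn_Ioi.symm measurableSet_Ioi

lemma integral_laplacePDFReal_mul_exp :
    ∫ x, laplacePDFReal lam x * exp (s * x) = (1 - s ^ 2 * lam ^ 2)⁻¹ := by
  have hl : 0 < lam := inv_pos.mp ((abs_nonneg s).trans_lt hs)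
  have hlo : 0 < s + lam⁻¹ := by linarith [neg_abs_le s]
  have hhi : s - lam⁻¹ < 0 := by linarith [le_abs_self s]
  have hint := integrable_laplacePDFReal_mul_exp hs
  rw [← intervalIntegral.integral_Iic_add_Ioi hint.integrableOn hint.integrableOn,
    setIntegral_congr_fun measurableSet_Iic laplacePDFReal_mul_exp_eqOn_Iic,
    setIntegral_congr_fun measurableSet_Ioi laplacePDFReal_mul_exp_eqOn_Ioi,
    integral_const_mul, integral_const_mul, integral_exp_mul_Iic hlo,
    integral_exp_mul_Ioi hhi]
  have hμ : lam * lam⁻¹ = 1 := mul_inv_cancel₀ hl.ne'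
  have hprod : 1 - s ^ 2 * lam ^ 2 = lam ^ 2 * ((s + lam⁻¹) * -(s - lam⁻¹)) := by
    linear_combination (-1 - lam⁻¹ * lam) * hμ
  simp only [mul_zero, exp_zero, hprod]
  -- hide `lam⁻¹` from `field_simp`, which would otherwise rewrite `s ± lam⁻¹` and lose `hlo`, `hhi`
  generalize lam⁻¹ = μ at hlo hhi hμ ⊢
  have := hl.ne'
  have := hlo.ne'
  have := hhi.ne
  field_simp
  linear_combination (-2) * hμ

lemma integrable_exp_mul_laplaceMeasure :
    Integrable (fun x => exp (s * x)) (laplaceMeasure lam) := by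
  have hl : 0 < lam := inv_pos.mp ((abs_nonneg s).trans_lt hs)
  rw [laplaceMeasure_eq_withDensity, integrable_withDensity_iff_integrable_smul'
    measurable_laplacePDFReal.ennreal_ofReal (ae_of_all _ fun _ => ENNReal.ofReal_lt_top)]
  simpa [ENNReal.toReal_ofReal (laplacePDFReal_nonneg hl.le _)]
    using integrable_laplacePDFReal_mul_exp hs

lemma mgf_id_laplaceMeasure : mgf id (laplaceMeasure lam) s = (1 - s ^ 2 * lam ^ 2)⁻¹ := by
  have hl : 0 < lam := inv_pos.mp ((abs_nonneg s).trans_lt hs)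
  rw [mgf, laplaceMeasure_eq_withDensity, integral_withDensity_eq_integral_toReal_smul
    measurable_laplacePDFReal.ennreal_ofReal (ae_of_all _ fun _ => ENNReal.ofReal_lt_top)]
  simpa [ENNReal.toReal_ofReal (laplacePDFReal_nonneg hl.le _)]
    using integral_laplacePDFReal_mul_exp hs

end Laplace

open Finset

section IndependentLaplace

variable {Ω ι : Type*} [MeasurableSpace Ω] {P : Measure Ω} {lam u : ℝ}

lemma integrable_exp_mul_of_map_eq_laplaceMeasure {X : Ω → ℝ} (hX : AEMeasurable X P)
    (hlaw : P.map X = laplaceMeasure lam) (hu : |u| < lam⁻¹) :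
    Integrable (fun ω => exp (u * X ω)) P := by
  have h := integrable_exp_mul_laplaceMeasure hu
  rw [← hlaw] at h
  exact (integrable_map_measure (by fun_prop) hX).mp h

lemma mgf_of_map_eq_laplaceMeasure {X : Ω → ℝ} (hX : AEMeasurable X P)
    (hlaw : P.map X = laplaceMeasure lam) (hu : |u| < lam⁻¹) :
    mgf X P u = (1 - u ^ 2 * lam ^ 2)⁻¹ := by
  rw [← mgf_id_map hX, hlaw, mgf_id_laplaceMeasure hu]

lemma one_sub_inv_four_mul_inv_pow_le_two (m : ℕ) : (1 - (4 * m : ℝ)⁻¹)⁻¹ ^ m ≤ 2 := by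
  have hbern : (3 / 4 : ℝ) ≤ (1 - (4 * m : ℝ)⁻¹) ^ m := by
    rcases m.eq_zero_or_pos with rfl | hm
    · norm_num
    have hm : (1 : ℝ) ≤ m := by exact_mod_cast hm
    calc (3 / 4 : ℝ) = 1 + m * -(4 * m : ℝ)⁻¹ := by field_simp; ring
      _ ≤ (1 + -(4 * m : ℝ)⁻¹) ^ m := one_add_mul_le_pow (by
          have : (4 * m : ℝ)⁻¹ ≤ 1 := inv_le_one_of_one_le₀ (by linarith)
          linarith) m
      _ = (1 - (4 * m : ℝ)⁻¹) ^ m := by rw [← sub_eq_add_neg]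
  rw [inv_pow]
  calc ((1 - (4 * m : ℝ)⁻¹) ^ m)⁻¹ ≤ (3 / 4)⁻¹ := inv_anti₀ (by norm_num) hbern
    _ ≤ 2 := by norm_num

variable {ξ : ι → Ω → ℝ} (hind : iIndepFun ξ P) (hmeas : ∀ i, Measurable (ξ i))
  (hlaw : ∀ i, P.map (ξ i) = laplaceMeasure lam)
include hind hmeas hlaw

lemma ProbabilityTheory.iIndepFun.integrable_exp_mul_sum_of_laplace (s : Finset ι)
    (hu : |u| < lam⁻¹) :
    Integrable (fun ω => exp (u * (∑ i ∈ s, ξ i) ω)) P :=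
  have := hind.isProbabilityMeasure
  hind.integrable_exp_mul_sum hmeas fun i _ =>
    integrable_exp_mul_of_map_eq_laplaceMeasure (hmeas i).aemeasurable (hlaw i) hu

lemma ProbabilityTheory.iIndepFun.mgf_sum_of_laplace (s : Finset ι) (hu : |u| < lam⁻¹) :
    mgf (∑ i ∈ s, ξ i) P u = (1 - u ^ 2 * lam ^ 2)⁻¹ ^ #s := by
  rw [hind.mgf_sum hmeas, prod_congr rfl fun i _ =>
    mgf_of_map_eq_laplaceMeasure (hmeas i).aemeasurable (hlaw i) hu, prod_const]

lemma ProbabilityTheory.iIndepFun.mgf_sum_of_laplace_le_two (hl : 0 < lam) {s : Finset ι}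
    (hs : s.Nonempty) (hu : |u| = (2 * lam * √(#s : ℝ))⁻¹) :
    Integrable (fun ω => exp (u * (∑ i ∈ s, ξ i) ω)) P ∧ mgf (∑ i ∈ s, ξ i) P u ≤ 2 := by
  have hcard : (1 : ℝ) ≤ √(#s : ℝ) := one_le_sqrt.mpr (by exact_mod_cast hs.card_pos)
  have hu_lt : |u| < lam⁻¹ := by
    rw [hu]; exact inv_strictAnti₀ hl (by nlinarith)
  refine ⟨hind.integrable_exp_mul_sum_of_laplace hmeas hlaw s hu_lt, ?_⟩
  have hu2 : u ^ 2 * lam ^ 2 = (4 * #s : ℝ)⁻¹ := by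
    rw [← sq_abs, hu, inv_pow, mul_pow, mul_pow, sq_sqrt (Nat.cast_nonneg _)]
    field_simp
    ring
  rw [hind.mgf_sum_of_laplace hmeas hlaw s hu_lt, hu2]
  exact one_sub_inv_four_mul_inv_pow_le_two (#s)

end IndependentLaplace

section MaximalInequality

lemma abs_le_add_inv_mul_exp_mul_add {t : ℝ} (ht : 0 < t) (a x : ℝ) :
    |x| ≤ a + t⁻¹ * exp (-(t * a)) * (exp (t * x) + exp (-t * x)) := by
  have hlin : |x| - a ≤ t⁻¹ * exp (t * (|x| - a)) := by
    rw [le_inv_mul_iff₀ ht]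
    linarith [add_one_le_exp (t * (|x| - a))]
  have habs : exp (t * |x|) ≤ exp (t * x) + exp (-t * x) := by
    rcases abs_cases x with ⟨h, -⟩ | ⟨h, -⟩ <;> rw [h]
    · linarith [exp_pos (-t * x)]
    · rw [mul_neg, ← neg_mul]; linarith [exp_pos (t * x)]
  have hsplit : exp (t * (|x| - a)) = exp (-(t * a)) * exp (t * |x|) := by
    rw [← exp_add]; ring_nf
  calc |x| ≤ a + t⁻¹ * exp (t * (|x| - a)) := by linarith
    _ ≤ a + t⁻¹ * exp (-(t * a)) * (exp (t * x) + exp (-t * x)) := by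
      rw [hsplit, ← mul_assoc]; gcongr

variable {Ω ι : Type*} [MeasurableSpace Ω] {P : Measure Ω} [IsProbabilityMeasure P]

theorem lintegral_sup'_abs_le_of_mgf_le {s : Finset ι} (hs : s.Nonempty) {F : ι → Ω → ℝ}
    {t K : ℝ} (ht : 0 < t)
    (hint : ∀ i ∈ s, ∀ u, |u| = t → Integrable (fun ω => exp (u * F i ω)) P)
    (hmgf : ∀ i ∈ s, ∀ u, |u| = t → mgf (F i) P u ≤ K) :
    ∫⁻ ω, ENNReal.ofReal (s.sup' hs fun i => |F i ω|) ∂P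
      ≤ ENNReal.ofReal ((log (2 * #s * K) + 1) / t) := by
  obtain ⟨i₀, hi₀⟩ := hs
  have hK : 0 < 2 * #s * K := by
    have := (mgf_pos (hint i₀ hi₀ t (abs_of_pos ht))).trans_le
      (hmgf i₀ hi₀ t (abs_of_pos ht))
    have : (0 : ℝ) < #s := by exact_mod_cast card_pos.mpr ⟨i₀, hi₀⟩
    positivity
  set a := log (2 * #s * K) / t
  set c := t⁻¹ * exp (-(t * a))
  set G := fun ω => ∑ i ∈ s, (exp (t * F i ω) + exp (-t * F i ω))
  have ht_abs : |t| = t := abs_of_pos ht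
  have ht_neg : |-t| = t := by rw [abs_neg, ht_abs]
  have hG_int : Integrable G P :=
    integrable_finsetSum _ fun i hi => (hint i hi t ht_abs).add (hint i hi (-t) ht_neg)
  have hG : ∫ ω, G ω ∂P ≤ 2 * #s * K := by
    calc ∫ ω, G ω ∂P = ∑ i ∈ s, ∫ ω, (exp (t * F i ω) + exp (-t * F i ω)) ∂P :=
          integral_finsetSum _ fun i hi => (hint i hi t ht_abs).add (hint i hi (-t) ht_neg)
      _ = ∑ i ∈ s, (mgf (F i) P t + mgf (F i) P (-t)) :=
          sum_congr rfl fun i hi => integral_add (hint i hi t ht_abs) (hint i hi (-t) ht_neg)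
      _ ≤ ∑ _i ∈ s, (K + K) := sum_le_sum fun i hi =>
          add_le_add (hmgf i hi t ht_abs) (hmgf i hi (-t) ht_neg)
      _ = 2 * #s * K := by rw [sum_const, nsmul_eq_mul]; ring
  have hpt : ∀ ω, s.sup' ⟨i₀, hi₀⟩ (fun i => |F i ω|) ≤ a + c * G ω := fun ω =>
    sup'_le _ _ fun i hi => (abs_le_add_inv_mul_exp_mul_add ht a (F i ω)).trans <| by
      gcongr
      exact single_le_sum (f := fun i => exp (t * F i ω) + exp (-t * F i ω))
        (fun _ _ => by positivity) hi
  have hc : c * (2 * #s * K) = t⁻¹ := by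
    simp only [c, a]
    rw [mul_div_cancel₀ _ ht.ne', exp_neg, exp_log hK, inv_mul_cancel_right₀ hK.ne']
  calc ∫⁻ ω, ENNReal.ofReal (s.sup' ⟨i₀, hi₀⟩ fun i => |F i ω|) ∂P
      ≤ ∫⁻ ω, ENNReal.ofReal (a + c * G ω) ∂P :=
        lintegral_mono fun ω => ENNReal.ofReal_le_ofReal (hpt ω)
    _ = ENNReal.ofReal (∫ ω, (a + c * G ω) ∂P) :=
        (ofReal_integral_eq_lintegral_ofReal ((integrable_const a).add (hG_int.const_mul c))
          (ae_of_all _ fun ω =>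
            ((abs_nonneg _).trans (le_sup' (fun i => |F i ω|) hi₀)).trans (hpt ω))).symm
    _ ≤ ENNReal.ofReal ((log (2 * #s * K) + 1) / t) := by
      refine ENNReal.ofReal_le_ofReal ?_
      rw [integral_add (integrable_const a) (hG_int.const_mul c), integral_const,
        integral_const_mul, probReal_univ, one_smul, add_div, one_div, ← hc]
      gcongr

end MaximalInequality

lemma log_two_mul_mul_two_add_one_le {x : ℝ} (hx : 2 ≤ x) :
    log (2 * x * 2) + 1 ≤ 5 * log x := by
  have hlog2 : 1 / 2 < log 2 := by linarith [log_two_gt_d9]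
  have hlogx : log 2 ≤ log x := log_le_log (by norm_num) hx
  rw [log_mul (by positivity) (by norm_num), log_mul (by norm_num) (by positivity)]
  linarith

/-- There is a universal constant `C > 0` such that for any `m * d` mutually independent
Laplace(`lam`) random variables `ξ (i, n)`, the expectation of
`max_{n} |∑_{i} ξ (i, n)|` is at most `C * √m * lam * ln d`. -/
theorem expected_max_abs_sum_laplace :
    ∃ C : ℝ, 0 < C ∧
      ∀ (Ω : Type*) (_ : MeasurableSpace Ω) (P : Measure Ω), IsProbabilityMeasure P →
      ∀ (lam : ℝ), 0 < lam →
      ∀ (m d : ℕ) (_ : 1 ≤ m) (hd : 2 ≤ d)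
        (ξ : Fin m × Fin d → Ω → ℝ), (∀ q, Measurable (ξ q)) →
        iIndepFun ξ P →
        (∀ q, P.map (ξ q) = laplaceMeasure lam) →
        ∫⁻ ω, ENNReal.ofReal
            (Finset.univ.sup' ⟨(⟨0, by omega⟩ : Fin d), Finset.mem_univ _⟩
              fun n => |∑ i, ξ (i, n) ω|) ∂P
          ≤ ENNReal.ofReal (C * Real.sqrt m * lam * Real.log d) := by
  refine ⟨10, by norm_num, fun Ω _ P _ lam hl m d hm hd ξ hmeas hind hlaw => ?_⟩
  have hrow (n : Fin d) (u : ℝ) (hu : |u| = (2 * lam * √(m : ℝ))⁻¹) :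
      Integrable (fun ω => exp (u * ∑ i, ξ (i, n) ω)) P ∧
        mgf (fun ω => ∑ i, ξ (i, n) ω) P u ≤ 2 := by
    simpa [Finset.sum_fn] using
      (hind.precomp (Prod.mk_left_injective n)).mgf_sum_of_laplace_le_two (fun _ => hmeas _)
        (fun _ => hlaw _) hl ⟨⟨0, hm⟩, mem_univ _⟩ (by simpa using hu)
  refine (lintegral_sup'_abs_le_of_mgf_le _ (F := fun n ω => ∑ i, ξ (i, n) ω) (by positivity)
    (fun n _ u hu => (hrow n u hu).1) (fun n _ u hu => (hrow n u hu).2)).trans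
    (ENNReal.ofReal_le_ofReal ?_)
  rw [card_univ, Fintype.card_fin, div_inv_eq_mul]
  calc (log (2 * d * 2) + 1) * (2 * lam * √(m : ℝ))
      = 2 * (lam * √(m : ℝ)) * (log (2 * d * 2) + 1) := by ring
    _ ≤ 2 * (lam * √(m : ℝ)) * (5 * log d) := by
      gcongr; exact log_two_mul_mul_two_add_one_le (by exact_mod_cast hd)
    _ = 10 * √(m : ℝ) * lam * log d := by ring
end

section
/- Let K ≥ 2 be a natural number and let r, α : ℕ → ℝ be sequences such that for every natural number k with 1 ≤ k ≤ K−1, r(k+1) ≤ (1 − 2/(k+1))·r(k) + α(k). Then r(K) ≤ ∑_{k=1}^{K−1} α(k) · (k·(k+1)) / (K·(K−1)). -/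
lemma fw_aux (r α : ℕ → ℝ) :
    ∀ n : ℕ, 2 ≤ n →
    (∀ k : ℕ, 1 ≤ k → k + 1 ≤ n →
      r (k + 1) ≤ (1 - 2 / ((k : ℝ) + 1)) * r k + α k) →
    r n ≤ (∑ k ∈ Finset.Icc 1 (n - 1), α k * ((k : ℝ) * ((k : ℝ) + 1)))
        / ((n : ℝ) * ((n : ℝ) - 1)) := by
  intro n hn
  induction n, hn using Nat.le_induction with
  | base =>
    intro hrec
    have h := hrec 1 le_rfl le_rfl
    norm_num at h
    norm_num [show (2:ℕ)-1 = 1 from rfl, Finset.Icc_self]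
    linarith
  | succ n hn ih =>
    intro hrec
    have ih' := ih (fun k hk hk' => hrec k hk (hk'.trans (Nat.le_succ n)))
    have hrn := hrec n (by omega) le_rfl
    have hnR : (2 : ℝ) ≤ (n : ℝ) := by exact_mod_cast hn
    have hfac : (0 : ℝ) ≤ 1 - 2 / ((n : ℝ) + 1) := by
      rw [sub_nonneg, div_le_one (by linarith)]; linarith
    have h2 : (1 - 2 / ((n : ℝ) + 1)) * r n ≤
        (1 - 2 / ((n : ℝ) + 1)) *
        ((∑ k ∈ Finset.Icc 1 (n - 1), α k * ((k : ℝ) * ((k : ℝ) + 1)))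
          / ((n : ℝ) * ((n : ℝ) - 1))) := by
      exact mul_le_mul_of_nonneg_left ih' hfac
    have hsum : ∑ k ∈ Finset.Icc 1 (n + 1 - 1), α k * ((k : ℝ) * ((k : ℝ) + 1))
        = (∑ k ∈ Finset.Icc 1 (n - 1), α k * ((k : ℝ) * ((k : ℝ) + 1)))
          + α n * ((n : ℝ) * ((n : ℝ) + 1)) := by
      have h1 : n + 1 - 1 = (n - 1) + 1 := by omega
      rw [h1, Finset.sum_Icc_succ_top (by omega : 1 ≤ n - 1 + 1)]
      have h2 : n - 1 + 1 = n := by omega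
      rw [h2]
    rw [hsum]
    set S := ∑ k ∈ Finset.Icc 1 (n - 1), α k * ((k : ℝ) * ((k : ℝ) + 1)) with hS
    have key : (1 - 2 / ((n : ℝ) + 1)) * (S / ((n : ℝ) * ((n : ℝ) - 1))) + α n
        = (S + α n * ((n : ℝ) * ((n : ℝ) + 1)))
          / ((n : ℝ) * ((n : ℝ) + 1)) := by
      have h1 : (n : ℝ) ≠ 0 := by linarith
      have h2 : (n : ℝ) - 1 ≠ 0 := by linarith
      have h3 : (n : ℝ) + 1 ≠ 0 := by linarith
      field_simp
      ring
    have : r (n + 1) ≤ (S + α n * ((n : ℝ) * ((n : ℝ) + 1)))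
        / ((n : ℝ) * ((n : ℝ) + 1)) := by
      calc r (n + 1) ≤ (1 - 2 / ((n : ℝ) + 1)) * r n + α n := hrn
        _ ≤ (1 - 2 / ((n : ℝ) + 1)) * (S / ((n : ℝ) * ((n : ℝ) - 1))) + α n := by
            linarith
        _ = _ := key
    have hcast : ((n + 1 : ℕ) : ℝ) * (((n + 1 : ℕ) : ℝ) - 1) = (n : ℝ) * ((n : ℝ) + 1) := by
      push_cast; ring
    rw [hcast]
    exact this

/-- Frank–Wolfe error recursion with step sizes `η k = 2/(k+1)`: if
`r (k+1) ≤ (1 - 2/(k+1)) * r k + α k` for `1 ≤ k ≤ K-1`, then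
`r K ≤ ∑_{k=1}^{K-1} α k * (k*(k+1)) / (K*(K-1))`. -/
theorem frank_wolfe_recursion (K : ℕ) (hK : 2 ≤ K) (r α : ℕ → ℝ)
    (hrec : ∀ k : ℕ, 1 ≤ k → k ≤ K - 1 →
      r (k + 1) ≤ (1 - 2 / ((k : ℝ) + 1)) * r k + α k) :
    r K ≤ ∑ k ∈ Finset.Icc 1 (K - 1),
      α k * ((k : ℝ) * ((k : ℝ) + 1)) / ((K : ℝ) * ((K : ℝ) - 1)) := by
  have h := fw_aux r α K hK (fun k hk hk' => hrec k hk (by omega))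
  rw [show (∑ k ∈ Finset.Icc 1 (K - 1),
      α k * ((k : ℝ) * ((k : ℝ) + 1)) / ((K : ℝ) * ((K : ℝ) - 1)))
    = (∑ k ∈ Finset.Icc 1 (K - 1), α k * ((k : ℝ) * ((k : ℝ) + 1)))
      / ((K : ℝ) * ((K : ℝ) - 1)) from (Finset.sum_div _ _ _).symm]
  exact h
end

section
/- Let (Ω, ℙ) be a probability space, let p ∈ (0,1], and let W₁, …, W_n : Ω → ℕ be independent random variables, each geometrically distributed with success probability p, i.e., ℙ(W_i = j) = (1−p)^{j−1}·p for every integer j ≥ 1. Then for every natural number k with k ≥ n, ℙ(∑_{i=1}^n W_i > 2k/p) ≤ exp(−k/4). -/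
/-!
Chernoff bound with the tilt `t = -log (1 - p/2)`. For this `t` the moment generating function
`p eᵗ / (1 - (1 - p) eᵗ)` of each `W i` equals `2`, so
`ℙ(∑ W i ≥ 2k/p) ≤ e^{-2tk/p} 2ⁿ ≤ e^{-k} 2ᵏ ≤ e^{-k/4}`,
using `log (1 - p/2) ≤ -p/2`, `n ≤ k` and `log 2 ≤ 3/4`.
-/

open MeasureTheory ProbabilityTheory Real

theorem log_one_sub_half_mul_le {p : ℝ} (hp0 : 0 < p) (hp2 : p < 2) {x : ℝ} (hx : 0 ≤ x) :
    log (1 - p / 2) * (2 * x / p) ≤ -x := by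
  have hlog : log (1 - p / 2) ≤ -p / 2 := by
    linarith [log_le_sub_one_of_pos (show 0 < 1 - p / 2 by linarith)]
  calc log (1 - p / 2) * (2 * x / p) ≤ -p / 2 * (2 * x / p) := by gcongr
    _ = -x := by field_simp

theorem exp_neg_mul_two_pow_le {n k : ℕ} (hk : n ≤ k) : exp (-k) * 2 ^ n ≤ exp (-k / 4) := by
  have hlog2 : log 2 ≤ 3 / 4 := by linarith [log_two_lt_d9]
  calc exp (-k) * 2 ^ n ≤ exp (-k) * 2 ^ k := by gcongr; norm_num
    _ = exp (-k + k * log 2) := by rw [exp_add, exp_nat_mul, exp_log two_pos]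
    _ ≤ exp (-k / 4) := by gcongr; nlinarith [(k.cast_nonneg : (0 : ℝ) ≤ k)]

theorem one_sub_mul_inv_one_sub_half_lt_one {p : ℝ} (hp0 : 0 < p) (hp2 : p < 2) :
    (1 - p) * (1 - p / 2)⁻¹ < 1 := by
  rw [← div_eq_mul_inv, div_lt_one (by linarith)]
  linarith

theorem mul_inv_one_sub_half_div_eq_two {p : ℝ} (hp0 : p ≠ 0) (hp2 : p ≠ 2) :
    p * (1 - p / 2)⁻¹ / (1 - (1 - p) * (1 - p / 2)⁻¹) = 2 := by
  have hq : 1 - p / 2 ≠ 0 := fun h => hp2 (by linarith)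
  rw [← div_eq_mul_inv, ← div_eq_mul_inv, one_sub_div (a := 1 - p) hq,
    div_div_div_cancel_right₀ hq, show 1 - p / 2 - (1 - p) = p / 2 by ring, div_div_eq_mul_div,
    mul_div_cancel_left₀ _ hp0]

theorem MeasureTheory.Measure.ext_of_singleton_ne {α : Type*} [MeasurableSpace α]
    [MeasurableSingletonClass α] [Countable α] {μ ν : Measure α} [IsProbabilityMeasure μ]
    [IsProbabilityMeasure ν] (a : α) (h : ∀ x, x ≠ a → μ {x} = ν {x}) : μ = ν := by
  have hcompl : μ {a}ᶜ = ν {a}ᶜ := by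
    have hrestrict : μ.restrict {a}ᶜ = ν.restrict {a}ᶜ := by
      refine Measure.ext_iff_singleton.2 fun x => ?_
      simp only [Measure.restrict_apply (measurableSet_singleton x)]
      by_cases hx : x = a
      · simp [hx]
      · rw [Set.inter_eq_left.2 (by simpa [eq_comm] using hx), h x hx]
    simpa using congrArg (· Set.univ) hrestrict
  refine Measure.ext_iff_singleton.2 fun x => ?_
  by_cases hx : x = a
  · rw [hx, ← compl_compl ({a} : Set α), prob_compl_eq_one_sub (measurableSet_singleton a).compl,
      prob_compl_eq_one_sub (measurableSet_singleton a).compl, hcompl]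
  · exact h x hx

theorem hasSum_geometric_mul_exp_succ {p : unitInterval} {t : ℝ} (ht : (1 - p) * exp t < 1) :
    HasSum (fun n : ℕ => ((1 - p : ℝ) ^ n * p) * exp (t * (n + 1 : ℕ)))
      (p * exp t / (1 - (1 - p) * exp t)) := by
  have hr : 0 ≤ (1 - p : ℝ) * exp t := mul_nonneg (by grind) (exp_pos t).le
  have hterm : (fun n : ℕ => ((1 - p : ℝ) ^ n * p) * exp (t * (n + 1 : ℕ)))
      = fun n => p * exp t * ((1 - p) * exp t) ^ n := by
    funext n
    rw [mul_pow, ← exp_nat_mul, Nat.cast_succ, mul_add_one, exp_add]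
    ring_nf
  rw [hterm, div_eq_mul_inv]
  exact (hasSum_geometric_of_lt_one hr ht).mul_left _

section GeometricTrials

variable {Ω : Type*} [MeasurableSpace Ω] {P : Measure Ω} {p : unitInterval} {V : Ω → ℕ} {t : ℝ}

/-- `geometricMeasure` counts failures; a number of trials is that plus one. The mass `P {V = 0}`
is not prescribed, but total mass one forces it to vanish. -/
theorem map_eq_geometricMeasure_map_succ [IsProbabilityMeasure P] (hp : p ≠ 0)
    (hV : Measurable V)
    (hlaw : ∀ j, 1 ≤ j → P {ω | V ω = j} = ENNReal.ofReal ((1 - p) ^ (j - 1) * p)) :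
    P.map V = (geometricMeasure p).map Nat.succ := by
  have := Measure.isProbabilityMeasure_map (μ := P) hV.aemeasurable
  have := Measure.isProbabilityMeasure_map (μ := geometricMeasure p)
    (measurable_from_nat (f := Nat.succ)).aemeasurable
  refine Measure.ext_of_singleton_ne 0 fun j hj => ?_
  obtain ⟨m, rfl⟩ := Nat.exists_eq_succ_of_ne_zero hj
  rw [Measure.map_apply hV (measurableSet_singleton _),
    Measure.map_apply (measurable_from_nat (f := Nat.succ)) (measurableSet_singleton _)]
  have hsucc : Nat.succ ⁻¹' {m + 1} = {m} := by ext; simp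
  rw [hsucc, geometricMeasure_singleton hp]
  exact hlaw (m + 1) (by omega)

theorem integrable_exp_mul_of_map_eq_geometricMeasure_map_succ (hp : p ≠ 0) (hV : Measurable V)
    (hlaw : P.map V = (geometricMeasure p).map Nat.succ) (ht : (1 - p) * exp t < 1) :
    Integrable (fun ω => exp (t * V ω)) P := by
  have hint : Integrable (fun n : ℕ => exp (t * n)) (P.map V) := by
    rw [hlaw, integrable_map_measure .of_discrete
        (measurable_from_nat (f := Nat.succ)).aemeasurable,
      integrable_geometricMeasure_iff hp]
    simpa using (hasSum_geometric_mul_exp_succ ht).summable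
  exact hint.comp_measurable hV

theorem mgf_of_map_eq_geometricMeasure_map_succ (hp : p ≠ 0) (hV : Measurable V)
    (hlaw : P.map V = (geometricMeasure p).map Nat.succ) (ht : (1 - p) * exp t < 1) :
    mgf (fun ω => (V ω : ℝ)) P t = p * exp t / (1 - (1 - p) * exp t) := by
  rw [← Function.comp_def Nat.cast V, ← mgf_map hV.aemeasurable .of_discrete, hlaw,
    mgf_map (measurable_from_nat (f := Nat.succ)).aemeasurable .of_discrete, mgf,
    integral_geometricMeasure hp]
  exact (hasSum_geometric_mul_exp_succ ht).tsum_eq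

theorem ProbabilityTheory.iIndepFun.measureReal_sum_ge_le_exp_mul_pow [IsFiniteMeasure P]
    {ι : Type*} [Fintype ι] {X : ι → Ω → ℝ} (hindep : iIndepFun X P)
    (hmeas : ∀ i, Measurable (X i)) (ht : 0 ≤ t)
    (hint : ∀ i, Integrable (fun ω => exp (t * X i ω)) P) {M : ℝ}
    (hmgf : ∀ i, mgf (X i) P t = M) (ε : ℝ) :
    P.real {ω | ε ≤ ∑ i, X i ω} ≤ exp (-t * ε) * M ^ Fintype.card ι := by
  have h := measure_ge_le_exp_mul_mgf (X := ∑ i, X i) ε ht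
    (hindep.integrable_exp_mul_sum hmeas (s := Finset.univ) fun i _ => hint i)
  rw [hindep.mgf_sum hmeas, Finset.prod_congr rfl fun i _ => hmgf i, Finset.prod_const,
    Finset.card_univ] at h
  simpa only [Finset.sum_apply] using h

end GeometricTrials

theorem geometric_sum_concentration_general {Ω : Type*} [MeasurableSpace Ω]
    (P : Measure Ω) [IsProbabilityMeasure P]
    (p : ℝ) (hp0 : 0 < p) (hp1 : p ≤ 1) (n : ℕ)
    (W : Fin n → Ω → ℕ) (hmeas : ∀ i, Measurable (W i))
    (hindep : iIndepFun W P)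
    (hgeom : ∀ i, ∀ j : ℕ, 1 ≤ j →
      P {ω | W i ω = j} = ENNReal.ofReal ((1 - p) ^ (j - 1) * p))
    (k : ℕ) (hk : n ≤ k) :
    P {ω | 2 * (k : ℝ) / p < ∑ i, (W i ω : ℝ)}
      ≤ ENNReal.ofReal (Real.exp (-(k : ℝ) / 4)) := by
  set q : unitInterval := ⟨p, hp0.le, hp1⟩
  have hq : q ≠ 0 := fun h => hp0.ne' (congrArg Subtype.val h)
  set t := -log (1 - p / 2)
  have hexp : exp t = (1 - p / 2)⁻¹ := by rw [exp_neg, exp_log (by linarith)]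
  have ht0 : 0 ≤ t := neg_nonneg.2 (log_nonpos (by linarith) (by linarith))
  have ht : (1 - q) * exp t < 1 := hexp ▸ one_sub_mul_inv_one_sub_half_lt_one hp0 (by linarith)
  have hmgf : (q : ℝ) * exp t / (1 - (1 - q) * exp t) = 2 :=
    hexp ▸ mul_inv_one_sub_half_div_eq_two hp0.ne' (by linarith)
  have hlaw i := map_eq_geometricMeasure_map_succ hq (hmeas i) (hgeom i)
  have hchernoff := (hindep.comp (fun _ => (Nat.cast : ℕ → ℝ)) fun _ => measurable_from_nat)
    |>.measureReal_sum_ge_le_exp_mul_pow (fun i => measurable_from_nat.comp (hmeas i)) ht0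
      (fun i => integrable_exp_mul_of_map_eq_geometricMeasure_map_succ hq (hmeas i) (hlaw i) ht)
      (fun i => (mgf_of_map_eq_geometricMeasure_map_succ hq (hmeas i) (hlaw i) ht).trans hmgf)
      (2 * k / p)
  rw [Fintype.card_fin] at hchernoff
  calc P {ω | 2 * (k : ℝ) / p < ∑ i, (W i ω : ℝ)}
      ≤ P {ω | 2 * (k : ℝ) / p ≤ ∑ i, (W i ω : ℝ)} :=
        measure_mono (Set.ofPred_subset_ofPred.2 fun _ => le_of_lt)
    _ = ENNReal.ofReal (P.real {ω | 2 * (k : ℝ) / p ≤ ∑ i, (W i ω : ℝ)}) := by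
      rw [ofReal_measureReal]
    _ ≤ ENNReal.ofReal (exp (-k) * 2 ^ n) := by
      refine ENNReal.ofReal_le_ofReal (hchernoff.trans ?_)
      gcongr
      linarith [log_one_sub_half_mul_le hp0 (by linarith) (by positivity : (0 : ℝ) ≤ k)]
    _ ≤ ENNReal.ofReal (exp (-k / 4)) := ENNReal.ofReal_le_ofReal (exp_neg_mul_two_pow_le hk)

/-- Concentration of sums of i.i.d. geometric random variables: if `W 1, …, W n` are
independent, each geometric with success probability `p` (i.e.
`ℙ(W i = j) = (1-p)^(j-1) * p` for `j ≥ 1`), then for every `k ≥ n`,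
`ℙ(∑ W i > 2*k/p) ≤ exp (-k/4)`. -/
theorem geometric_sum_concentration {Ω : Type*} [MeasurableSpace Ω]
    (P : Measure Ω) [IsProbabilityMeasure P]
    (p : ℝ) (hp0 : 0 < p) (hp1 : p ≤ 1) (n : ℕ) (hn : 1 ≤ n)
    (W : Fin n → Ω → ℕ) (hmeas : ∀ i, Measurable (W i))
    (hindep : iIndepFun W P)
    (hgeom : ∀ i, ∀ j : ℕ, 1 ≤ j →
      P {ω | W i ω = j} = ENNReal.ofReal ((1 - p) ^ (j - 1) * p))
    (k : ℕ) (hk : n ≤ k) :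
    P {ω | 2 * (k : ℝ) / p < ∑ i, (W i ω : ℝ)}
      ≤ ENNReal.ofReal (Real.exp (-(k : ℝ) / 4)) :=
  geometric_sum_concentration_general P p hp0 hp1 n W hmeas hindep hgeom k hk
end

section
/- Let d ≥ 1 be a natural number, η > 0, and L, L' : Fin d → ℝ with L(x) ≤ L'(x) for all x. Define φ = ∑_{x} exp(−η·L(x)/2) and φ' = ∑_{x} exp(−η·L'(x)/2), and assume φ' ≥ φ/2. Then ∑_{x : L'(x) − L(x) ≥ 4/η} exp(−η·L(x)/2) / φ ≤ 2/3. -/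
/-- Switching-probability estimate for the exponential mechanism: under the
exponential-weights distribution with weights `exp (-η * L x / 2)`, the mass of the
experts whose loss increases by at least `4/η` is at most `2/3`, provided the potential
decreases by at most a factor of `2`. -/
theorem exponential_mechanism_switch_mass (d : ℕ) (hd : 1 ≤ d) (η : ℝ) (hη : 0 < η)
    (L L' : Fin d → ℝ) (hLL' : ∀ x, L x ≤ L' x)
    (hpot : (∑ x, Real.exp (-η * L x / 2)) / 2 ≤ ∑ x, Real.exp (-η * L' x / 2)) :
    (∑ x ∈ Finset.univ.filter fun x => 4 / η ≤ L' x - L x, Real.exp (-η * L x / 2))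
      / (∑ x, Real.exp (-η * L x / 2)) ≤ 2 / 3 := by
  have hd' : Nonempty (Fin d) := ⟨⟨0, hd⟩⟩
  set φ := ∑ x, Real.exp (-η * L x / 2) with hφ
  set B := Finset.univ.filter fun x : Fin d => 4 / η ≤ L' x - L x with hB
  set S := ∑ x ∈ B, Real.exp (-η * L x / 2) with hS
  have hφpos : 0 < φ :=
    Finset.sum_pos (fun x _ => Real.exp_pos _) Finset.univ_nonempty
  have hSnn : 0 ≤ S := Finset.sum_nonneg fun x _ => (Real.exp_pos _).le
  -- exp(-2) ≤ 1/4
  have he2 : Real.exp (-2) ≤ 1 / 4 := by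
    have h1 : (2:ℝ) ≤ Real.exp 1 := by
      have := Real.exp_one_gt_d9; linarith
    have h4 : (4:ℝ) ≤ Real.exp 2 := by
      have h2 : Real.exp 2 = Real.exp 1 * Real.exp 1 := by
        rw [← Real.exp_add]; norm_num
      nlinarith
    rw [Real.exp_neg]
    rw [inv_le_comm₀ (Real.exp_pos 2) (by norm_num)]
    linarith
  -- key bound on φ'
  have hkey : (∑ x, Real.exp (-η * L' x / 2)) ≤ Real.exp (-2) * S + (φ - S) := by
    rw [hφ, hS, ← Finset.sum_filter_add_sum_filter_not Finset.univ
      (fun x : Fin d => 4 / η ≤ L' x - L x) (fun x => Real.exp (-η * L' x / 2)),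
      ← Finset.sum_filter_add_sum_filter_not Finset.univ
      (fun x : Fin d => 4 / η ≤ L' x - L x) (fun x => Real.exp (-η * L x / 2)),
      Finset.mul_sum]
    have h1 : ∀ x ∈ B, Real.exp (-η * L' x / 2) ≤ Real.exp (-2) * Real.exp (-η * L x / 2) := by
      intro x hx
      rw [← Real.exp_add]
      apply Real.exp_le_exp.mpr
      have hx' : 4 / η ≤ L' x - L x := (Finset.mem_filter.mp hx).2
      have : 4 ≤ η * (L' x - L x) := by
        rw [div_le_iff₀ hη] at hx'; linarith [mul_comm η (L' x - L x)]
      nlinarith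
    have h2 : ∀ x ∈ Finset.univ.filter fun x : Fin d => ¬ (4 / η ≤ L' x - L x),
        Real.exp (-η * L' x / 2) ≤ Real.exp (-η * L x / 2) := by
      intro x _
      apply Real.exp_le_exp.mpr
      have := hLL' x
      nlinarith
    have g1 := Finset.sum_le_sum h1
    have g2 := Finset.sum_le_sum h2
    rw [hB] at g1 ⊢
    linarith
  have hmain : (3/4 : ℝ) * S ≤ φ / 2 := by nlinarith
  rw [div_le_iff₀ hφpos]
  linarith
end
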